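/- Let $(X,\mathcal{G},m)$ be a probability space and $H\colon X\to\mathbb{R}$ a function. Suppose that for every $t\in\mathbb{R}\setminus\{0\}$ there exist $\alpha^t\in[0,2\pi)$ and a function $k^t\colon X\to\mathbb{Z}$ such that $tH(x) = \alpha^t + 2\pi k^t(x)$ for all $x\in X$. Then $H$ is constant. -/
import Mathlib


theorem const_of_lattice_valued {X : Type*} [MeasurableSpace X]
    {m : MeasureTheory.Measure X} [MeasureTheory.IsProbabilityMeasure m]
    (H : X → ℝ)
    (h : ∀ t : ℝ, t ≠ 0 → ∃ (α : ℝ) (k : X → ℤ), α ∈ Set.Ico 0 (2 * Real.pi) ∧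
      ∀ x : X, t * H x = α + 2 * Real.pi * (k x : ℝ)) :
    ∀ x y : X, H x = H y := by
  intro x y
  by_contra hxy
  obtain ⟨α₁, k₁, -, hk₁⟩ := h 1 one_ne_zero
  obtain ⟨α₂, k₂, -, hk₂⟩ := h (Real.sqrt 2)
    (by positivity)
  have pi_pos := Real.pi_pos
  have e1 : H x - H y = 2 * Real.pi * ((k₁ x : ℝ) - k₁ y) := by
    have := hk₁ x; have := hk₁ y; ring_nf at *; linarith
  have e2 : Real.sqrt 2 * (H x - H y) = 2 * Real.pi * ((k₂ x : ℝ) - k₂ y) := by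
    have := hk₂ x; have := hk₂ y; ring_nf at *; linarith
  have hd1 : (k₁ x : ℝ) - k₁ y ≠ 0 := by
    intro h0
    apply hxy
    have : H x - H y = 0 := by rw [e1, h0]; ring
    linarith
  have hs : Real.sqrt 2 = ((k₂ x - k₂ y : ℤ) : ℝ) / ((k₁ x - k₁ y : ℤ) : ℝ) := by
    push_cast
    field_simp
    rw [e1] at e2
    nlinarith [e2]
  have : Irrational (Real.sqrt 2) := irrational_sqrt_two
  rw [hs] at this
  exact this ⟨(k₂ x - k₂ y : ℤ) / (k₁ x - k₁ y : ℤ), by push_cast; ring⟩
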